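/- Let P ∈ ℝ², let 𝒰 ⊂ ℝ² be an open neighborhood of P, and let g ∈ L¹(𝒰). Then there exists a twice continuously differentiable function ζ : ℝ² → ℝ with compact support contained in 𝒰, equal to 1 in a neighborhood of P, such that ∫_𝒰 ζ(x) g(x) dx = 0. -/

import Mathlib

open MeasureTheory Real Set Complex Metric Topology Filter
open scoped ENNReal NNReal BigOperators ContDiff

noncomputable section

/-- The plane. -/
abbrev E2 : Type := EuclideanSpace ℝ (Fin 2)
/-- The space of values of (complex) vector fields on the plane. -/
abbrev Cv : Type := EuclideanSpace ℂ (Fin 2)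

/-- Standard basis vectors of the plane. -/
def e2 (j : Fin 2) : E2 := EuclideanSpace.single j (1 : ℝ)

/-- The partial derivative `∂f/∂x_j`. -/
def pd {F : Type} [NormedAddCommGroup F] [NormedSpace ℝ F] (j : Fin 2) (f : E2 → F) :
    E2 → F := fun x => fderiv ℝ f x (e2 j)

/-- Divergence `∇·u` of a vector field. -/
def divV (u : E2 → Cv) : E2 → ℂ := fun x => ∑ j, pd j u x j

/-- Componentwise Laplacian. -/
def lapV {F : Type} [NormedAddCommGroup F] [NormedSpace ℝ F] (u : E2 → F) : E2 → F :=
  fun x => ∑ j, pd j (pd j u) x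

/-- Gradient of a scalar field, as a vector field. -/
def gradS (p : E2 → ℂ) : E2 → Cv := fun x => WithLp.toLp 2 (fun i : Fin 2 => pd i p x)

/-- The parameter-dependent Stokes system
`s u − Δu − ∇(∇·u) + ∇p = f`, `−∇·u = g` on the set `Ω`. -/
def StokesOn (Ω : Set E2) (s : ℂ) (u : E2 → Cv) (p : E2 → ℂ) (f : E2 → Cv) (g : E2 → ℂ) :
    Prop :=
  (∀ x ∈ Ω, s • u x - lapV u x - gradS (divV u) x + gradS p x = f x) ∧
  (∀ x ∈ Ω, -(divV u x) = g x)

/-- The squared weighted Sobolev "integral" defining the `V_β^l` norm, with corners `P`. -/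
def Vint {F : Type} [NormedAddCommGroup F] [NormedSpace ℝ F] (Ω : Set E2) {n : ℕ}
    (P : Fin n → E2) (β : Fin n → ℝ) (l : ℕ) (u : E2 → F) : ℝ≥0∞ :=
  ∫⁻ x in Ω, ∑ k ∈ Finset.range (l + 1),
    ENNReal.ofReal ((∏ j, dist x (P j) ^ (2 * (β j - (l : ℝ) + (k : ℝ)))) *
      ‖iteratedFDeriv ℝ k u x‖ ^ 2)

/-- Membership in the weighted Sobolev space `V_β^l(Ω)`. -/
def MemV {F : Type} [NormedAddCommGroup F] [NormedSpace ℝ F] (Ω : Set E2) {n : ℕ}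
    (P : Fin n → E2) (β : Fin n → ℝ) (l : ℕ) (u : E2 → F) : Prop :=
  Vint Ω P β l u ≠ ⊤

/-- The weighted Sobolev norm `‖u‖_{V_β^l(Ω)}`. -/
def Vnorm {F : Type} [NormedAddCommGroup F] [NormedSpace ℝ F] (Ω : Set E2) {n : ℕ}
    (P : Fin n → E2) (β : Fin n → ℝ) (l : ℕ) (u : E2 → F) : ℝ :=
  Real.sqrt (Vint Ω P β l u).toReal

/-- The `L₂(Ω)` pairing `∫ g v̄`. -/
def pairL2 (Ω : Set E2) (g v : E2 → ℂ) : ℂ :=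
  ∫ x in Ω, g x * (starRingEnd ℂ) (v x)

/-- The `L₂(Ω)` pairing of vector fields. -/
def pairL2V (Ω : Set E2) (f v : E2 → Cv) : ℂ :=
  ∫ x in Ω, ∑ i, f x i * (starRingEnd ℂ) (v x i)

/-- Membership of (the functional generated by) `g` in the dual space `(V_{−β}^1(Ω))^*`. -/
def MemVdual (Ω : Set E2) {n : ℕ} (P : Fin n → E2) (β : Fin n → ℝ) (g : E2 → ℂ) : Prop :=
  ∃ C : ℝ, ∀ v : E2 → ℂ, MemV Ω P (fun j => -β j) 1 v →
    ‖pairL2 Ω g v‖ ≤ C * Vnorm Ω P (fun j => -β j) 1 v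

/-- The norm of `g` in the dual space `(V_{−β}^1(Ω))^*`. -/
def VdualNorm (Ω : Set E2) {n : ℕ} (P : Fin n → E2) (β : Fin n → ℝ) (g : E2 → ℂ) : ℝ :=
  sInf {C : ℝ | 0 ≤ C ∧ ∀ v : E2 → ℂ, MemV Ω P (fun j => -β j) 1 v →
    ‖pairL2 Ω g v‖ ≤ C * Vnorm Ω P (fun j => -β j) 1 v}

/-- The point with polar coordinates `(r, φ)`. -/
def polarPt (r φ : ℝ) : E2 :=
  WithLp.toLp 2 (fun i : Fin 2 => if i = 0 then r * Real.cos φ else r * Real.sin φ)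

/-- The plane angle (sector) `K` with aperture `α`. -/
def Kang (α : ℝ) : Set E2 := {x | ∃ r > 0, ∃ φ ∈ Ioo 0 α, x = polarPt r φ}

/-- The side `Γ₁ = {φ = 0}` of the angle. -/
def KangSide1 : Set E2 := {x | ∃ r > 0, x = polarPt r 0}

/-- The side `Γ₂ = {φ = α}` of the angle. -/
def KangSide2 (α : ℝ) : Set E2 := {x | ∃ r > 0, x = polarPt r α}

/-- The single corner (the vertex, at the origin) of the angle `K`. -/
def originCorner : Fin 1 → E2 := fun _ => 0

/-- `lam` is the solution of `sin(λα) + λ sin α = 0` with smallest positive real part. -/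
def IsLambdaStar (α : ℝ) (lam : ℂ) : Prop :=
  Complex.sin (lam * (α : ℂ)) + lam * Complex.sin (α : ℂ) = 0 ∧ 0 < lam.re ∧
  ∀ μ : ℂ, Complex.sin (μ * (α : ℂ)) + μ * Complex.sin (α : ℂ) = 0 → 0 < μ.re →
    lam.re ≤ μ.re

/-- A bounded polygonal domain in the plane with corners `corner j` of openings
`opening j`, near each of which the domain coincides with a plane angle. -/
structure PolygonalDomain (n : ℕ) where
  carrier : Set E2
  corner : Fin n → E2
  opening : Fin n → ℝ
  isOpen : IsOpen carrier
  bounded : Bornology.IsBounded carrier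
  connected : IsConnected carrier
  corner_injective : Function.Injective corner
  opening_mem : ∀ j, opening j ∈ Ioo 0 (2 * π)
  corner_mem : ∀ j, corner j ∈ frontier carrier
  angle_near : ∀ j, ∃ ε > 0, ∃ R : E2 ≃ₗᵢ[ℝ] E2, ∀ x ∈ ball (corner j) ε,
    (x ∈ carrier ↔ ∃ r > 0, ∃ φ ∈ Ioo 0 (opening j), x = corner j + R (polarPt r φ))

/-- The smooth part `Γ` of the boundary of a polygonal domain. -/
def PolygonalDomain.Gamma {n : ℕ} (D : PolygonalDomain n) : Set E2 :=
  frontier D.carrier \ Set.range D.corner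

/-- The squared (unweighted) Sobolev `W¹` integral. -/
def W1int {F : Type} [NormedAddCommGroup F] [NormedSpace ℝ F] (Ω : Set E2) (u : E2 → F) :
    ℝ≥0∞ :=
  ∫⁻ x in Ω, (ENNReal.ofReal (‖u x‖ ^ 2) + ENNReal.ofReal (‖fderiv ℝ u x‖ ^ 2))

/-- The Sobolev norm `‖u‖_{W¹(Ω)}`. -/
def W1norm {F : Type} [NormedAddCommGroup F] [NormedSpace ℝ F] (Ω : Set E2) (u : E2 → F) :
    ℝ := Real.sqrt (W1int Ω u).toReal

/-- Membership in the Sobolev space `W¹(Ω)`. -/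
def MemW1 {F : Type} [NormedAddCommGroup F] [NormedSpace ℝ F] (Ω : Set E2) (u : E2 → F) :
    Prop := W1int Ω u ≠ ⊤

/-- Membership in `W̊¹(Ω)`, the closure of `C₀^∞(Ω)` in `W¹(Ω)`. -/
def MemW10 {F : Type} [NormedAddCommGroup F] [NormedSpace ℝ F] (Ω : Set E2) (u : E2 → F) :
    Prop :=
  MemW1 Ω u ∧ ∀ δ > (0 : ℝ), ∃ v : E2 → F, ContDiff ℝ (⊤ : ℕ∞) v ∧ HasCompactSupport v ∧
    tsupport v ⊆ Ω ∧ W1norm Ω (u - v) < δ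

/-- The squared `L₂(Ω)` integral. -/
def L2int {F : Type} [NormedAddCommGroup F] (Ω : Set E2) (u : E2 → F) : ℝ≥0∞ :=
  ∫⁻ x in Ω, ENNReal.ofReal (‖u x‖ ^ 2)

/-- The `L₂(Ω)` norm. -/
def L2norm {F : Type} [NormedAddCommGroup F] (Ω : Set E2) (u : E2 → F) : ℝ :=
  Real.sqrt (L2int Ω u).toReal

/-- Membership in `L₂(Ω)`. -/
def MemL2 {F : Type} [NormedAddCommGroup F] (Ω : Set E2) (u : E2 → F) : Prop :=
  L2int Ω u ≠ ⊤

/-- The strain tensor `ε_{ij}(u) = (∂u_i/∂x_j + ∂u_j/∂x_i)/2`. -/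
def strain (u : E2 → Cv) (i j : Fin 2) : E2 → ℂ :=
  fun x => (pd j u x i + pd i u x j) / 2

/-- The sesquilinear form `b_s(u, v̄) = ∫_Ω (s u·v̄ + 2 Σ_{ij} ε_{ij}(u) ε_{ij}(v̄))`. -/
def bform (Ω : Set E2) (s : ℂ) (u v : E2 → Cv) : ℂ :=
  ∫ x in Ω, (s * ∑ i, u x i * (starRingEnd ℂ) (v x i) +
    2 * ∑ i, ∑ j, strain u i j x * (starRingEnd ℂ) (strain v i j x))

/-- An element of `W^{−1}(Ω)`: a bounded (conjugate-linear) functional on `W̊¹(Ω)`. -/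
structure Wm1 (Ω : Set E2) where
  toFun : (E2 → Cv) → ℂ
  map_add : ∀ v w, toFun (v + w) = toFun v + toFun w
  map_smul : ∀ (a : ℂ) (v), toFun (a • v) = (starRingEnd ℂ) a * toFun v
  bound : ∃ C : ℝ, ∀ v, MemW10 Ω v → ‖toFun v‖ ≤ C * W1norm Ω v

/-- The norm in `W^{−1}(Ω)`. -/
def Wm1norm (Ω : Set E2) (f : Wm1 Ω) : ℝ :=
  sInf {C : ℝ | 0 ≤ C ∧ ∀ v, MemW10 Ω v → ‖f.toFun v‖ ≤ C * W1norm Ω v}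

/-- `ν` is an outward unit normal vector to `Ω` at the boundary point `x`. -/
def IsOutwardNormal (Ω : Set E2) (x ν : E2) : Prop :=
  ‖ν‖ = 1 ∧ ∃ ε > (0 : ℝ), ∀ t ∈ Ioo (0 : ℝ) ε, x + t • ν ∉ closure Ω ∧ x - t • ν ∈ Ω

/-- Weak solution of the parameter-dependent Stokes system in `W̊¹(Ω) × L̊₂(Ω)`. -/
def WeakStokes {n : ℕ} (D : PolygonalDomain n) (s : ℂ) (u : E2 → Cv) (p : E2 → ℂ)
    (f : E2 → Cv) (g : E2 → ℂ) : Prop :=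
  MemW10 D.carrier u ∧ MemL2 D.carrier p ∧ (∫ x in D.carrier, p x) = 0 ∧
  (∀ v : E2 → Cv, MemW10 D.carrier v →
    bform D.carrier s u v - (∫ x in D.carrier, p x * (starRingEnd ℂ) (divV v x)) =
      pairL2V D.carrier f v) ∧
  (∀ x ∈ D.carrier, -(divV u x) = g x)

/-- The weighted `L₂` norm on the smooth boundary part `Γ` (w.r.t. 1-dim Hausdorff measure). -/
def VnormGamma {n : ℕ} (D : PolygonalDomain n) (β : Fin n → ℝ) {F : Type}
    [NormedAddCommGroup F] (v : E2 → F) : ℝ :=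
  Real.sqrt (∫⁻ x in D.Gamma,
    ENNReal.ofReal ((∏ j, dist x (D.corner j) ^ (2 * β j)) * ‖v x‖ ^ 2) ∂μH[1]).toReal

/-- The weighted boundary norm `‖Du‖_{V_{γ−1/2}^0(Γ)}` of the matrix `Du = (∂u_j/∂x_i)`. -/
def DuNormGamma {n : ℕ} (D : PolygonalDomain n) (γ : Fin n → ℝ) (u : E2 → Cv) : ℝ :=
  Real.sqrt (∫⁻ x in D.Gamma,
    ENNReal.ofReal ((∏ j, dist x (D.corner j) ^ (2 * (γ j - 1 / 2))) *
      ∑ i, ∑ k, ‖pd i u x k‖ ^ 2) ∂μH[1]).toReal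

/-- Time derivative of a time-dependent function. -/
def tderiv {F : Type} [NormedAddCommGroup F] [NormedSpace ℝ F] (u : ℝ → E2 → F) :
    ℝ → E2 → F := fun t x => deriv (fun τ => u τ x) t

/-- The squared `L₂(J; V_β^l(Ω))` integral. -/
def VintT {F : Type} [NormedAddCommGroup F] [NormedSpace ℝ F] (J : Set ℝ) (Ω : Set E2)
    {n : ℕ} (P : Fin n → E2) (β : Fin n → ℝ) (l : ℕ) (u : ℝ → E2 → F) : ℝ≥0∞ :=
  ∫⁻ t in J, Vint Ω P β l (u t)

/-- The norm of `L₂(J; V_β^l(Ω))`. -/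
def VnormT {F : Type} [NormedAddCommGroup F] [NormedSpace ℝ F] (J : Set ℝ) (Ω : Set E2)
    {n : ℕ} (P : Fin n → E2) (β : Fin n → ℝ) (l : ℕ) (u : ℝ → E2 → F) : ℝ :=
  Real.sqrt (VintT J Ω P β l u).toReal

/-- Multiplication of a time-dependent function by the weight `e^{−γ t}`. -/
def expw {F : Type} [NormedAddCommGroup F] [NormedSpace ℝ F] (γ : ℝ) (u : ℝ → E2 → F) :
    ℝ → E2 → F := fun t x => Real.exp (-γ * t) • u t x

/-- The squared `W_β^{2,1}(Ω × J)` integral. -/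
def W21int {F : Type} [NormedAddCommGroup F] [NormedSpace ℝ F] (J : Set ℝ) (Ω : Set E2)
    {n : ℕ} (P : Fin n → E2) (β : Fin n → ℝ) (u : ℝ → E2 → F) : ℝ≥0∞ :=
  VintT J Ω P β 2 u + VintT J Ω P β 0 (tderiv u)

/-- Membership in `W̊_β^{2,1}(Ω × J)` (with zero initial value). -/
def MemW21 {F : Type} [NormedAddCommGroup F] [NormedSpace ℝ F] (J : Set ℝ) (Ω : Set E2)
    {n : ℕ} (P : Fin n → E2) (β : Fin n → ℝ) (u : ℝ → E2 → F) : Prop :=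
  W21int J Ω P β u ≠ ⊤ ∧ ∀ x ∈ Ω, u 0 x = 0

/-- The norm of `W_β^{2,1}(Ω × J)`. -/
def W21norm {F : Type} [NormedAddCommGroup F] [NormedSpace ℝ F] (J : Set ℝ) (Ω : Set E2)
    {n : ℕ} (P : Fin n → E2) (β : Fin n → ℝ) (u : ℝ → E2 → F) : ℝ :=
  Real.sqrt (W21int J Ω P β u).toReal

/-- The squared `W_β^{1,1}(Ω × J)` integral. -/
def W11int (J : Set ℝ) (Ω : Set E2) {n : ℕ} (P : Fin n → E2) (β : Fin n → ℝ)
    (g : ℝ → E2 → ℂ) : ℝ≥0∞ :=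
  VintT J Ω P β 1 g + ∫⁻ t in J, ENNReal.ofReal ((VdualNorm Ω P β (tderiv g t)) ^ 2)

/-- Membership in `W̊_β^{1,1}(Ω × J)` (with zero initial value). -/
def MemW11 (J : Set ℝ) (Ω : Set E2) {n : ℕ} (P : Fin n → E2) (β : Fin n → ℝ)
    (g : ℝ → E2 → ℂ) : Prop :=
  W11int J Ω P β g ≠ ⊤ ∧ (∀ᵐ t ∂(volume.restrict J), MemVdual Ω P β (tderiv g t)) ∧
  ∀ x ∈ Ω, g 0 x = 0

/-- The norm of `W_β^{1,1}(Ω × J)`. -/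
def W11norm (J : Set ℝ) (Ω : Set E2) {n : ℕ} (P : Fin n → E2) (β : Fin n → ℝ)
    (g : ℝ → E2 → ℂ) : ℝ :=
  Real.sqrt (W11int J Ω P β g).toReal

/-- The nonstationary Stokes system with Dirichlet boundary condition on `Γb` and zero
initial condition, on the time interval `J`. -/
def StokesEvol (Ω Γb : Set E2) (J : Set ℝ) (u : ℝ → E2 → Cv) (p : ℝ → E2 → ℂ)
    (f : ℝ → E2 → Cv) (g : ℝ → E2 → ℂ) : Prop :=
  (∀ t ∈ J, ∀ x ∈ Ω,
    tderiv u t x - lapV (u t) x - gradS (divV (u t)) x + gradS (p t) x = f t x) ∧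
  (∀ t ∈ J, ∀ x ∈ Ω, -(divV (u t) x) = g t x) ∧
  (∀ t ∈ J, ∀ x ∈ Γb, u t x = 0) ∧
  (∀ x ∈ Ω, u 0 x = 0)

/-- The Laplace transform in time. -/
def laplaceT (u : ℝ → E2 → ℂ) (s : ℂ) : E2 → ℂ :=
  fun x => ∫ t in Ioi (0 : ℝ), Complex.exp (-(s * (t : ℂ))) * u t x

/-- Holomorphy in the half-plane `Re s > γ` (pointwise in `x ∈ Ω`). -/
def HoloOn (Ω : Set E2) (γ : ℝ) (U : ℂ → E2 → ℂ) : Prop :=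
  ∀ x ∈ Ω, DifferentiableOn ℂ (fun s => U s x) {s : ℂ | γ < s.re}

/-- The line integral `(1/i)∫_{Re s = σ} ‖U(s)‖²_{V_β^0} ds`. -/
def lineInt0 (Ω : Set E2) {n : ℕ} (P : Fin n → E2) (β : Fin n → ℝ) (U : ℂ → E2 → ℂ)
    (σ : ℝ) : ℝ≥0∞ :=
  ∫⁻ τ : ℝ, Vint Ω P β 0 (U (σ + τ * Complex.I))

/-- The squared `H_β(Ω, γ)` norm. -/
def H0int (Ω : Set E2) {n : ℕ} (P : Fin n → E2) (β : Fin n → ℝ) (γ : ℝ) (U : ℂ → E2 → ℂ) :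
    ℝ≥0∞ := ⨆ σ ∈ Ioi γ, lineInt0 Ω P β U σ

def MemH0 (Ω : Set E2) {n : ℕ} (P : Fin n → E2) (β : Fin n → ℝ) (γ : ℝ) (U : ℂ → E2 → ℂ) :
    Prop := HoloOn Ω γ U ∧ H0int Ω P β γ U ≠ ⊤

def H0norm (Ω : Set E2) {n : ℕ} (P : Fin n → E2) (β : Fin n → ℝ) (γ : ℝ) (U : ℂ → E2 → ℂ) :
    ℝ := Real.sqrt (H0int Ω P β γ U).toReal

/-- The line integral for the `H_β^1(Ω, γ)` norm. -/
def lineInt1 (Ω : Set E2) {n : ℕ} (P : Fin n → E2) (β : Fin n → ℝ) (U : ℂ → E2 → ℂ)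
    (σ : ℝ) : ℝ≥0∞ :=
  ∫⁻ τ : ℝ, (Vint Ω P β 1 (U (σ + τ * Complex.I)) +
    ENNReal.ofReal (‖(σ : ℂ) + τ * Complex.I‖ ^ 2 *
      (VdualNorm Ω P β (U (σ + τ * Complex.I))) ^ 2))

/-- The squared `H_β^1(Ω, γ)` norm. -/
def H1int (Ω : Set E2) {n : ℕ} (P : Fin n → E2) (β : Fin n → ℝ) (γ : ℝ) (U : ℂ → E2 → ℂ) :
    ℝ≥0∞ := ⨆ σ ∈ Ioi γ, lineInt1 Ω P β U σ

def MemH1 (Ω : Set E2) {n : ℕ} (P : Fin n → E2) (β : Fin n → ℝ) (γ : ℝ) (U : ℂ → E2 → ℂ) :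
    Prop :=
  HoloOn Ω γ U ∧ H1int Ω P β γ U ≠ ⊤ ∧ ∀ s : ℂ, γ < s.re → MemVdual Ω P β (U s)

def H1norm (Ω : Set E2) {n : ℕ} (P : Fin n → E2) (β : Fin n → ℝ) (γ : ℝ) (U : ℂ → E2 → ℂ) :
    ℝ := Real.sqrt (H1int Ω P β γ U).toReal

/-- The line integral for the `H_β^2(Ω, γ)` norm. -/
def lineInt2 (Ω : Set E2) {n : ℕ} (P : Fin n → E2) (β : Fin n → ℝ) (U : ℂ → E2 → ℂ)
    (σ : ℝ) : ℝ≥0∞ :=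
  ∫⁻ τ : ℝ, (Vint Ω P β 2 (U (σ + τ * Complex.I)) +
    ENNReal.ofReal (‖(σ : ℂ) + τ * Complex.I‖ ^ 2) * Vint Ω P β 0 (U (σ + τ * Complex.I)))

/-- The squared `H_β^2(Ω, γ)` norm. -/
def H2int (Ω : Set E2) {n : ℕ} (P : Fin n → E2) (β : Fin n → ℝ) (γ : ℝ) (U : ℂ → E2 → ℂ) :
    ℝ≥0∞ := ⨆ σ ∈ Ioi γ, lineInt2 Ω P β U σ

def MemH2 (Ω : Set E2) {n : ℕ} (P : Fin n → E2) (β : Fin n → ℝ) (γ : ℝ) (U : ℂ → E2 → ℂ) :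
    Prop := HoloOn Ω γ U ∧ H2int Ω P β γ U ≠ ⊤

def H2norm (Ω : Set E2) {n : ℕ} (P : Fin n → E2) (β : Fin n → ℝ) (γ : ℝ) (U : ℂ → E2 → ℂ) :
    ℝ := Real.sqrt (H2int Ω P β γ U).toReal

/-- from the proof of Lemma 3.6: existence of a `C²` cut-off function
`ζ` supported in `𝒰`, equal to `1` near `P`, with `∫_𝒰 ζ g = 0`. -/
theorem stmt_14 (P : E2) (U : Set E2) (hU : IsOpen U) (hP : P ∈ U) (g : E2 → ℝ)
    (hg : IntegrableOn g U) :
    ∃ ζ : E2 → ℝ, ContDiff ℝ 2 ζ ∧ HasCompactSupport ζ ∧ tsupport ζ ⊆ U ∧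
      (∀ᶠ x in 𝓝 P, ζ x = 1) ∧ (∫ x in U, ζ x * g x) = 0 := by
  obtain ⟨ε, εpos, hball⟩ := Metric.isOpen_iff.1 hU P hP
  set c : ContDiffBump P := ⟨ε/2, 3*ε/4, by positivity, by linarith⟩ with hc
  have hrout : c.rOut < ε := by show 3*ε/4 < ε; linarith
  have hts0 : tsupport (⇑c) ⊆ U := by
    rw [c.tsupport_eq]
    exact (closedBall_subset_ball hrout).trans hball
  have hcint : Integrable (fun x => c x * g x) (volume.restrict U) := by
    refine Integrable.bdd_mul (c := 1) hg ?_ (Filter.Eventually.of_forall fun x => ?_)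
    · exact c.continuous.aestronglyMeasurable
    · rw [Real.norm_eq_abs, _root_.abs_of_nonneg c.nonneg]; exact c.le_one
  set A := ∫ x in U, c x * g x with hA
  by_cases hA0 : A = 0
  · exact ⟨⇑c, c.contDiff, c.hasCompactSupport, hts0, c.eventuallyEq_one, hA0⟩
  have hVopen : IsOpen (U \ {P}) := hU.sdiff isClosed_singleton
  by_cases hall : ∀ η : E2 → ℝ, ContDiff ℝ ∞ η → HasCompactSupport η →
      tsupport η ⊆ U \ {P} → ∫ x, η x • g x ∂(volume.restrict U) = 0
  · exfalso
    have hli : LocallyIntegrableOn g (U \ {P}) (volume.restrict U) :=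
      hg.locallyIntegrable.locallyIntegrableOn _
    have h0 := hVopen.ae_eq_zero_of_integral_contDiff_smul_eq_zero hli hall
    have hPn : ∀ᵐ x ∂(volume.restrict U), x ≠ P := by
      refine ae_iff.2 ?_
      have h1 : volume.restrict U {P} = 0 := by
        rw [Measure.restrict_apply (measurableSet_singleton P)]
        exact measure_mono_null Set.inter_subset_left (measure_singleton P)
      simp only [ne_eq, not_not]
      simpa using h1
    have hg0 : ∀ᵐ x ∂(volume.restrict U), g x = 0 := by
      filter_upwards [h0, hPn, ae_restrict_mem hU.measurableSet] with x h1 h2 h3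
      exact h1 ⟨h3, h2⟩
    apply hA0
    rw [hA]
    calc (∫ x in U, c x * g x) = ∫ x in U, (0:ℝ) := by
          apply integral_congr_ae
          filter_upwards [hg0] with x hx; rw [hx, mul_zero]
      _ = 0 := by simp
  · push_neg at hall
    obtain ⟨η, hηs, hηc, hηts, hηne⟩ := hall
    set B := ∫ x, η x • g x ∂(volume.restrict U) with hB
    have hηint : Integrable (fun x => η x * g x) (volume.restrict U) := by
      obtain ⟨C, hC⟩ := (hηs.continuous.norm.bddAbove_range_of_hasCompactSupport hηc.norm)
      exact Integrable.bdd_mul (c := C) hg hηs.continuous.aestronglyMeasurable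
        (Filter.Eventually.of_forall fun x => hC ⟨x, rfl⟩)
    have hsub2 : tsupport (fun x => c x - (A/B) * η x) ⊆
        tsupport ⇑c ∪ tsupport (fun x => A/B * η x) := by
      refine closure_minimal ?_ ((isClosed_tsupport _).union (isClosed_tsupport _))
      intro x hx
      by_contra hxx
      simp only [Set.mem_union, not_or] at hxx
      apply hx
      simp [image_eq_zero_of_notMem_tsupport hxx.1, image_eq_zero_of_notMem_tsupport hxx.2]
    refine ⟨fun x => c x - (A / B) * η x, ?_, ?_, ?_, ?_, ?_⟩
    · exact c.contDiff.sub ((contDiff_const.mul hηs).of_le (by exact_mod_cast le_top))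
    · exact (c.hasCompactSupport.union hηc.mul_left).of_isClosed_subset (isClosed_tsupport _) hsub2
    · refine hsub2.trans (union_subset hts0 ?_)
      refine (closure_minimal ?_ (isClosed_tsupport η)).trans (hηts.trans diff_subset)
      intro x hx
      have : η x ≠ 0 := fun h => hx (by simp [h])
      exact subset_tsupport η this
    · have h1 : ∀ᶠ x in 𝓝 P, η x = 0 := by
        have hPη : P ∉ tsupport η := fun h => (hηts h).2 rfl
        filter_upwards [(isClosed_tsupport η).isOpen_compl.mem_nhds hPη] with x hx
        exact image_eq_zero_of_notMem_tsupport hx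
      filter_upwards [c.eventuallyEq_one, h1] with x h h'
      simp [h, h']
    · have : (∫ x in U, (c x - (A/B) * η x) * g x)
          = (∫ x in U, c x * g x) - ∫ x in U, (A/B) * (η x * g x) := by
        rw [← integral_sub hcint (hηint.const_mul _)]
        congr 1; ext x; ring
      rw [this, integral_const_mul]
      have hBeq : (∫ x in U, η x * g x) = B := by
        rw [hB]; simp [smul_eq_mul]
      rw [hBeq, ← hA, div_mul_cancel₀ _ hηne, sub_self]


end
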